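/- Let m ≥ 1, let d ≤ 2^m be a natural number, and let B be a set of functions (Fin m → ZMod 2) → ZMod 2 such that any two distinct elements of B differ in at least d points (a binary code of length 2^m with minimum Hamming distance ≥ d). For a, b ∈ B and ε : ZMod 2 define the word w(a,b,ε) : (Fin m → ZMod 2) × ZMod 2 → ZMod 4 by w(a,b,ε)(x,0) = 2·(a x).val + (ε.val : ZMod 4) and w(a,b,ε)(x,1) = 2·(b x).val + 1 + (ε.val : ZMod 4) (concatenation of 2a + ε·1 and 2b + (1+ε)·1). Then: (i) any two distinct words w(a,b,ε) ≠ w(a',b',ε') have Lee distance at least 2d; (ii) if in addition every element of B is bent, then every word w(a,b,ε) is a bent function of m+1 variables (so the resulting quaternary code of length 2^{m+1} is constant-amplitude). -/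
import Mathlib


/-- The (real-valued) Fourier transform of a binary Boolean function. -/
def fourier2 {m : ℕ} (g : (Fin m → ZMod 2) → ZMod 2) (u : Fin m → ZMod 2) : ℝ :=
  ∑ x : Fin m → ZMod 2, (-1 : ℝ) ^ ((g x).val + (∑ j, u j * x j).val)

/-- The Fourier transform of a `ZMod 4`-valued function of `m + 1` binary variables. -/
noncomputable def fourier4' {m : ℕ} (f : (Fin m → ZMod 2) × ZMod 2 → ZMod 4)
    (u : Fin m → ZMod 2) (v : ZMod 2) : ℂ :=
  ∑ p : (Fin m → ZMod 2) × ZMod 2,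
    Complex.I ^ (f p).val * (-1 : ℂ) ^ ((∑ j, u j * p.1 j) + v * p.2).val

/-- The quaternary word obtained by concatenating `2a + ε·1` and `2b + (1+ε)·1`. -/
def cword {m : ℕ} (a b : (Fin m → ZMod 2) → ZMod 2) (ε : ZMod 2) :
    (Fin m → ZMod 2) × ZMod 2 → ZMod 4 :=
  fun p =>
    if p.2 = 0 then 2 * ((a p.1).val : ZMod 4) + (ε.val : ZMod 4)
    else 2 * ((b p.1).val : ZMod 4) + 1 + (ε.val : ZMod 4)

lemma zmod2_sum {M : Type*} [AddCommMonoid M] (g : ZMod 2 → M) :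
    ∑ y : ZMod 2, g y = g 0 + g 1 := by
  rw [show (Finset.univ : Finset (ZMod 2)) = {0, 1} by decide,
    Finset.sum_pair (by decide)]

lemma pow_mod_helper {M : Type*} [Monoid M] (x : M) (k n : ℕ) (hx : x ^ k = 1) :
    x ^ n = x ^ (n % k) := by
  conv_lhs => rw [← Nat.div_add_mod n k]
  rw [pow_add, pow_mul, hx, one_pow, one_mul]

lemma lee0 (s t e e' : ZMod 2) :
    min ((2 * ((s.val:ZMod 4)) + (e.val:ZMod 4) - (2 * ((t.val:ZMod 4)) + (e'.val:ZMod 4))).val)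
      (4 - (2 * ((s.val:ZMod 4)) + (e.val:ZMod 4) - (2 * ((t.val:ZMod 4)) + (e'.val:ZMod 4))).val)
    = if e = e' then (if s = t then 0 else 2) else 1 := by
  revert s t e e'; decide

lemma lee1 (s t e e' : ZMod 2) :
    min ((2 * ((s.val:ZMod 4)) + 1 + (e.val:ZMod 4) - (2 * ((t.val:ZMod 4)) + 1 + (e'.val:ZMod 4))).val)
      (4 - (2 * ((s.val:ZMod 4)) + 1 + (e.val:ZMod 4) - (2 * ((t.val:ZMod 4)) + 1 + (e'.val:ZMod 4))).val)
    = if e = e' then (if s = t then 0 else 2) else 1 := by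
  revert s t e e'; decide

lemma Ipow0 (s e : ZMod 2) :
    (Complex.I) ^ ((2 * ((s.val:ZMod 4)) + (e.val:ZMod 4)).val)
    = Complex.I ^ e.val * (-1:ℂ) ^ s.val := by
  have h : ((2 * ((s.val:ZMod 4)) + (e.val:ZMod 4)).val) % 4 = (2 * s.val + e.val) % 4 := by
    revert s e; decide
  rw [pow_mod_helper _ 4 _ Complex.I_pow_four, h,
    ← pow_mod_helper _ 4 _ Complex.I_pow_four, pow_add, pow_mul, Complex.I_sq]
  ring

lemma Ipow1 (s e : ZMod 2) :
    (Complex.I) ^ ((2 * ((s.val:ZMod 4)) + 1 + (e.val:ZMod 4)).val)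
    = Complex.I ^ e.val * Complex.I * (-1:ℂ) ^ s.val := by
  have h : ((2 * ((s.val:ZMod 4)) + 1 + (e.val:ZMod 4)).val) % 4
      = (2 * s.val + 1 + e.val) % 4 := by revert s e; decide
  rw [pow_mod_helper _ 4 _ Complex.I_pow_four, h,
    ← pow_mod_helper _ 4 _ Complex.I_pow_four, pow_add, pow_add, pow_mul, Complex.I_sq]
  ring

lemma negpow_add (α β : ZMod 2) :
    ((-1:ℂ)) ^ ((α + β).val) = (-1:ℂ) ^ α.val * (-1:ℂ) ^ β.val := by
  have h4 : (-1:ℂ) ^ 2 = 1 := by norm_num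
  have h : ((α + β).val) % 2 = (α.val + β.val) % 2 := by revert α β; decide
  rw [pow_mod_helper _ 2 _ h4, h, ← pow_mod_helper _ 2 _ h4, pow_add]

/-- Mapping a binary code `B` of length `2^m` and minimum Hamming distance `d` to the
quaternary code `{(2a + ε·1, 2b + (1+ε)·1) : a, b ∈ B, ε ∈ ZMod 2}` of length `2^{m+1}`:
(i) distinct words have Lee distance at least `2d`; (ii) if every word of `B` is bent then
every word of the quaternary code is bent (constant-amplitude). -/
theorem stmt8 (m d : ℕ) (hm : 1 ≤ m) (hd : d ≤ 2 ^ m)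
    (B : Set ((Fin m → ZMod 2) → ZMod 2))
    (hB : ∀ a ∈ B, ∀ b ∈ B, a ≠ b →
      d ≤ (Finset.univ.filter (fun x => a x ≠ b x)).card) :
    (∀ a ∈ B, ∀ b ∈ B, ∀ a' ∈ B, ∀ b' ∈ B, ∀ ε ε' : ZMod 2,
      cword a b ε ≠ cword a' b' ε' →
      2 * d ≤ ∑ p : (Fin m → ZMod 2) × ZMod 2,
        min ((cword a b ε p - cword a' b' ε' p).val)
          (4 - (cword a b ε p - cword a' b' ε' p).val)) ∧
    ((∀ g ∈ B, ∀ u, (fourier2 g u) ^ 2 = 2 ^ m) →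
      ∀ a ∈ B, ∀ b ∈ B, ∀ ε : ZMod 2, ∀ (u : Fin m → ZMod 2) (v : ZMod 2),
        Complex.normSq (fourier4' (cword a b ε) u v) = 2 ^ (m + 1)) := by
  constructor
  · intro a ha b hb a' ha' b' hb' ε ε' hne
    rw [Fintype.sum_prod_type_right, zmod2_sum]
    simp only [cword, eq_self_iff_true, if_true, if_neg (one_ne_zero (α := ZMod 2))]
    simp only [lee0, lee1]
    by_cases hε : ε = ε'
    · subst hε
      simp only [eq_self_iff_true, if_true]
      have hab : a ≠ a' ∨ b ≠ b' := by
        by_contra h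
        push_neg at h
        obtain ⟨h1, h2⟩ := h
        subst h1; subst h2
        exact hne rfl
      have sum_ham : ∀ f g : (Fin m → ZMod 2) → ZMod 2,
          (∑ x : Fin m → ZMod 2, if f x = g x then 0 else 2)
          = 2 * (Finset.univ.filter (fun x => f x ≠ g x)).card := by
        intro f g
        rw [Finset.sum_ite, Finset.sum_const, Finset.sum_const]
        simp [mul_comm]
      rcases hab with h | h
      · refine le_trans ?_ (Nat.le_add_right _ _)
        rw [sum_ham a a']
        exact Nat.mul_le_mul_left 2 (hB a ha a' ha' h)
      · refine le_trans ?_ (Nat.le_add_left _ _)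
        rw [sum_ham b b']
        exact Nat.mul_le_mul_left 2 (hB b hb b' hb' h)
    · simp only [if_neg hε, Finset.sum_const, Finset.card_univ, smul_eq_mul, mul_one]
      have hcard : Fintype.card (Fin m → ZMod 2) = 2 ^ m := by
        simp [Fintype.card_fun]
      rw [hcard]
      calc 2 * d ≤ 2 * 2 ^ m := Nat.mul_le_mul_left 2 hd
        _ ≤ 2 ^ m + 2 ^ m := by omega
  · intro hbent a ha b hb ε u v
    have cast2 : ∀ g : (Fin m → ZMod 2) → ZMod 2,
        ((fourier2 g u : ℝ) : ℂ)
        = ∑ x : Fin m → ZMod 2, (-1:ℂ) ^ ((g x).val + (∑ j, u j * x j).val) := by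
      intro g
      rw [fourier2]
      push_cast
      rfl
    have hF : fourier4' (cword a b ε) u v
        = Complex.I ^ ε.val *
          ((fourier2 a u : ℂ) + Complex.I * (-1:ℂ) ^ v.val * (fourier2 b u : ℂ)) := by
      rw [fourier4', Fintype.sum_prod_type_right, zmod2_sum]
      simp only [cword, eq_self_iff_true, if_true, if_neg (one_ne_zero (α := ZMod 2)),
        mul_zero, add_zero, mul_one]
      simp only [Ipow0, Ipow1, negpow_add]
      rw [cast2 a, cast2 b]
      simp only [mul_add, Finset.mul_sum]
      congr 1 <;> exact Finset.sum_congr rfl (fun x _ => by rw [pow_add]; ring)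
    rw [hF, map_mul, map_pow, Complex.normSq_I, one_pow, one_mul]
    have : ((fourier2 a u : ℝ) : ℂ) + Complex.I * (-1:ℂ) ^ v.val * (fourier2 b u : ℂ)
        = ((fourier2 a u : ℝ) : ℂ) + (((-1:ℝ) ^ v.val * fourier2 b u : ℝ) : ℂ) * Complex.I := by
      push_cast
      ring
    rw [this, Complex.normSq_add_mul_I]
    have h1 := hbent a ha u
    have h2 := hbent b hb u
    have h3 : ((-1:ℝ) ^ v.val) ^ 2 = 1 := by
      rw [← pow_mul, mul_comm, pow_mul]
      norm_num
    rw [mul_pow, h3, one_mul, h1, h2]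
    rw [pow_succ]
    ring
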